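/- arXiv:2004.06221 — 4 statements merged into one kernel-verified Lean document; each statement's English description precedes it below -/
import Mathlib

section
/- Let N ≥ 3 be an integer, N/(N−1) < p < 2, α := (p−1)(N−1), β := (p−1)/(α−1), so α > 1. For t > −β define u_t(r) := ∫_r^1 (β y + t y^α)^{−1/(p−1)} dy for 0 < r ≤ 1. Then the radial function u(x) := u_t(|x|) is a positive classical solution of −Δu = |∇u|^p in B_1 \ {0} with u = 0 on ∂B_1, and u_t(r) → ∞ as r → 0⁺. -/
open Metric Filter Set
open scoped Topology
open scoped RealInnerProductSpace

/-!
For a radial function `u x = f ‖x‖` one has `∇u = (f' r / r) • x` and `Δu = f'' + (N - 1) f' / r`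
with `r = ‖x‖`. Since `u_t' = -g` with `g r = (β r + t r ^ α) ^ (-1 / (p - 1))`, the equation
`-Δu = |∇u| ^ p` becomes the first order equation `g' + (N - 1) g / r = g ^ p`, which holds exactly
because `α = (p - 1) (N - 1)` and `β (α - 1) = p - 1`. The base `β r + t r ^ α` is positive on
`(0, 1]` as `t > -β` and `r ^ α ≤ r`. Finally `-1 / (p - 1) ≤ -1` gives `g r ≥ c / r`, so
`u_t r ≥ c log (1 / r) → ∞`.
-/

/-- The Laplacian of `f : ℝ^N → ℝ`, as the sum of pure second partial derivatives. -/
noncomputable def lap {N : ℕ} (f : EuclideanSpace ℝ (Fin N) → ℝ)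
    (x : EuclideanSpace ℝ (Fin N)) : ℝ :=
  ∑ i : Fin N, fderiv ℝ (fun y => fderiv ℝ f y (EuclideanSpace.single i 1)) x
    (EuclideanSpace.single i 1)

section Radial

variable {E : Type*} [NormedAddCommGroup E] [InnerProductSpace ℝ E] {x : E}

theorem hasFDerivAt_norm_of_ne_zero (hx : x ≠ 0) :
    HasFDerivAt (‖·‖) (‖x‖⁻¹ • innerSL ℝ x) x := by
  have hx' : ‖x‖ ≠ 0 := norm_ne_zero_iff.mpr hx
  have h := (Real.hasDerivAt_sqrt (pow_ne_zero 2 hx')).comp_hasFDerivAt x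
    (hasStrictFDerivAt_norm_sq x).hasFDerivAt
  simp only [Function.comp_def, Real.sqrt_sq (norm_nonneg _)] at h
  refine h.congr_fderiv (ContinuousLinearMap.ext fun v => ?_)
  simp only [smul_apply, coe_innerSL_apply, nsmul_eq_mul, Nat.cast_ofNat, smul_eq_mul]
  field_simp

theorem HasDerivAt.hasFDerivAt_comp_norm {f : ℝ → ℝ} {f' : ℝ} (hf : HasDerivAt f f' ‖x‖)
    (hx : x ≠ 0) :
    HasFDerivAt (fun y => f ‖y‖) ((f' / ‖x‖) • innerSL ℝ x) x := by
  have h := hf.comp_hasFDerivAt x (hasFDerivAt_norm_of_ne_zero hx)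
  rwa [smul_smul, ← div_eq_mul_inv] at h

theorem fderiv_fderiv_comp_norm_apply {f f' : ℝ → ℝ} {f'' : ℝ}
    (hf : ∀ᶠ r in 𝓝 ‖x‖, HasDerivAt f (f' r) r) (hf' : HasDerivAt f' f'' ‖x‖) (hx : x ≠ 0)
    (v : E) :
    fderiv ℝ (fun y => fderiv ℝ (fun z => f ‖z‖) y v) x v =
      f'' * (⟪x, v⟫ / ‖x‖) ^ 2 + f' ‖x‖ / ‖x‖ * (‖v‖ ^ 2 - (⟪x, v⟫ / ‖x‖) ^ 2) := by
  have hx' : ‖x‖ ≠ 0 := norm_ne_zero_iff.mpr hx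
  have hfirst : (fun y => fderiv ℝ (fun z => f ‖z‖) y v) =ᶠ[𝓝 x]
      fun y => f' ‖y‖ / ‖y‖ * innerSL ℝ v y := by
    filter_upwards [(continuous_norm.tendsto x).eventually hf, eventually_ne_nhds hx]
      with y hy hy0
    rw [(hy.hasFDerivAt_comp_norm hy0).fderiv, smul_apply, innerSL_apply_apply,
      innerSL_apply_apply, smul_eq_mul, real_inner_comm]
  have hquot : HasDerivAt (fun r => f' r / r) ((f'' * ‖x‖ - f' ‖x‖ * 1) / ‖x‖ ^ 2) ‖x‖ :=
    hf'.div (hasDerivAt_id _) hx'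
  have hsecond : HasFDerivAt (fun y => f' ‖y‖ / ‖y‖ * innerSL ℝ v y) _ x :=
    (hquot.hasFDerivAt_comp_norm hx).mul (innerSL ℝ v).hasFDerivAt
  rw [hfirst.fderiv_eq, hsecond.fderiv]
  simp only [add_apply, smul_apply, innerSL_apply_apply, smul_eq_mul, real_inner_self_eq_norm_sq,
    real_inner_comm v x]
  field_simp
  ring

theorem HasDerivAt.hasGradientAt_comp_norm [CompleteSpace E] {f : ℝ → ℝ} {f' : ℝ}
    (hf : HasDerivAt f f' ‖x‖) (hx : x ≠ 0) :
    HasGradientAt (fun y => f ‖y‖) ((f' / ‖x‖) • x) x := by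
  rw [hasGradientAt_iff_hasFDerivAt, map_smul]
  exact hf.hasFDerivAt_comp_norm hx

theorem HasDerivAt.norm_gradient_comp_norm [CompleteSpace E] {f : ℝ → ℝ} {f' : ℝ}
    (hf : HasDerivAt f f' ‖x‖) (hx : x ≠ 0) :
    ‖gradient (fun y => f ‖y‖) x‖ = |f'| := by
  rw [(hf.hasGradientAt_comp_norm hx).gradient, norm_smul, norm_div, Real.norm_eq_abs, norm_norm,
    div_mul_cancel₀ _ (norm_ne_zero_iff.mpr hx)]

end Radial

theorem lap_comp_norm {N : ℕ} {x : EuclideanSpace ℝ (Fin N)} {f f' : ℝ → ℝ} {f'' : ℝ}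
    (hf : ∀ᶠ r in 𝓝 ‖x‖, HasDerivAt f (f' r) r) (hf' : HasDerivAt f' f'' ‖x‖) (hx : x ≠ 0) :
    lap (fun y => f ‖y‖) x = f'' + (N - 1) * f' ‖x‖ / ‖x‖ := by
  have hdir : ∑ i : Fin N, (⟪x, EuclideanSpace.single i 1⟫ / ‖x‖) ^ 2 = 1 := by
    simp only [EuclideanSpace.inner_single_right, one_mul, conj_trivial, div_pow,
      ← Finset.sum_div, ← EuclideanSpace.real_norm_sq_eq]
    field_simp
  simp only [lap, fderiv_fderiv_comp_norm_apply hf hf' hx, PiLp.norm_single, norm_one,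
    one_pow, Finset.sum_add_distrib, ← Finset.mul_sum, Finset.sum_sub_distrib, hdir,
    Finset.sum_const, Finset.card_univ, Fintype.card_fin, nsmul_eq_mul, mul_one]
  ring

noncomputable def radialSlope (p α β t y : ℝ) : ℝ := (β * y + t * y ^ α) ^ (-(1 / (p - 1)))

noncomputable def radialProfile (p α β t r : ℝ) : ℝ := ∫ y in r..1, radialSlope p α β t y

section Profile

variable {p α β t : ℝ}

theorem mul_add_mul_rpow_pos (hβ : 0 ≤ β) (hα : 1 ≤ α) (ht : -β < t) {y : ℝ} (hy0 : 0 < y)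
    (hy1 : y ≤ 1) : 0 < β * y + t * y ^ α := by
  have hyα : y ^ α ≤ y := Real.rpow_le_self_of_le_one hy0.le hy1 hα
  nlinarith [mul_lt_mul_of_pos_right ht (Real.rpow_pos_of_pos hy0 α),
    mul_le_mul_of_nonneg_left hyα hβ]

theorem hasDerivAt_radialSlope {k r : ℝ} (hp : p ≠ 1) (hα : α = (p - 1) * k)
    (hβ : β * (α - 1) = p - 1) (hr : 0 < r) (hw : 0 < β * r + t * r ^ α) :
    HasDerivAt (radialSlope p α β t)
      (radialSlope p α β t r ^ p - k * radialSlope p α β t r / r) r := by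
  have hbase : HasDerivAt (fun y => β * y + t * y ^ α) (β * 1 + t * (α * r ^ (α - 1))) r :=
    ((hasDerivAt_id r).const_mul β).add ((Real.hasDerivAt_rpow_const (Or.inl hr.ne')).const_mul t)
  refine (hbase.rpow_const (p := -(1 / (p - 1))) (Or.inl hw.ne')).congr_deriv ?_
  set w := β * r + t * r ^ α with hw_def
  have hpow : (w ^ (-(1 / (p - 1)))) ^ p = w ^ (-(1 / (p - 1)) - 1) := by
    rw [← Real.rpow_mul hw.le]
    congr 1
    field_simp
    ring
  simp only [radialSlope, ← hw_def]
  rw [hpow, Real.rpow_sub_one hw.ne', Real.rpow_sub_one hr.ne']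
  field_simp
  subst hα
  linear_combination r * hβ

section Admissible

variable (hβ : 0 ≤ β) (hα : 1 ≤ α) (ht : -β < t)
include hβ hα ht

theorem contDiffOn_radialSlope {n : WithTop ℕ∞} :
    ContDiffOn ℝ n (radialSlope p α β t) (Ioc 0 1) := fun _ hy =>
  ((contDiffAt_const.mul contDiffAt_id).add (contDiffAt_const.mul
    (Real.contDiffAt_rpow_const_of_ne hy.1.ne'))).rpow_const_of_ne
    (mul_add_mul_rpow_pos hβ hα ht hy.1 hy.2).ne' |>.contDiffWithinAt

theorem intervalIntegrable_radialSlope {r : ℝ} (hr : 0 < r) (hr1 : r ≤ 1) :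
    IntervalIntegrable (radialSlope p α β t) MeasureTheory.volume r 1 :=
  ((contDiffOn_radialSlope (n := 0) hβ hα ht).continuousOn.mono (by
    rw [uIcc_of_le hr1]; exact Icc_subset_Ioc_iff hr1 |>.mpr ⟨hr, le_rfl⟩)).intervalIntegrable

theorem hasDerivAt_radialProfile {r : ℝ} (hr : r ∈ Ioo 0 1) :
    HasDerivAt (radialProfile p α β t) (-radialSlope p α β t r) r := by
  have hcont : ContinuousOn (radialSlope p α β t) (Ioo 0 1) :=
    (contDiffOn_radialSlope (n := 0) hβ hα ht).continuousOn.mono Ioo_subset_Ioc_self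
  exact intervalIntegral.integral_hasDerivAt_left
    (intervalIntegrable_radialSlope hβ hα ht hr.1 hr.2.le)
    (hcont.stronglyMeasurableAtFilter isOpen_Ioo r hr)
    (hcont.continuousAt (Ioo_mem_nhds hr.1 hr.2))

theorem contDiffOn_radialProfile {n : ℕ∞} :
    ContDiffOn ℝ n (radialProfile p α β t) (Ioo 0 1) := by
  refine ((contDiffOn_succ_iff_deriv_of_isOpen (n := n) isOpen_Ioo).2
    ⟨fun r hr => (hasDerivAt_radialProfile hβ hα ht hr).differentiableAt.differentiableWithinAt,
      by simp, ?_⟩).of_le le_self_add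
  exact ((contDiffOn_radialSlope (p := p) hβ hα ht).mono Ioo_subset_Ioc_self).neg.congr
    fun r hr => (hasDerivAt_radialProfile hβ hα ht hr).deriv

theorem radialProfile_pos {r : ℝ} (hr : r ∈ Ioo 0 1) : 0 < radialProfile p α β t r :=
  intervalIntegral.intervalIntegral_pos_of_pos_on
    (intervalIntegrable_radialSlope hβ hα ht hr.1 hr.2.le)
    (fun _ hy => Real.rpow_pos_of_pos
      (mul_add_mul_rpow_pos hβ hα ht (hr.1.trans hy.1) hy.2.le) _) hr.2

theorem rpow_mul_inv_le_radialSlope (hp : 1 < p) (hp2 : p ≤ 2) {y : ℝ} (hy0 : 0 < y)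
    (hy1 : y ≤ 1) : (β + |t|) ^ (-(1 / (p - 1))) * y⁻¹ ≤ radialSlope p α β t y := by
  have hexp : -(1 / (p - 1)) ≤ -1 := by
    rw [neg_le_neg_iff, le_div_iff₀ (by linarith)]
    linarith
  have hc : 0 < β + |t| := by linarith [le_abs_self t]
  have hw := mul_add_mul_rpow_pos hβ hα ht hy0 hy1
  have hwle : β * y + t * y ^ α ≤ (β + |t|) * y := by
    have := Real.rpow_le_self_of_le_one hy0.le hy1 hα
    nlinarith [mul_le_mul_of_nonneg_right (le_abs_self t) (Real.rpow_pos_of_pos hy0 α).le,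
      mul_le_mul_of_nonneg_left this (abs_nonneg t)]
  calc (β + |t|) ^ (-(1 / (p - 1))) * y⁻¹
      ≤ (β + |t|) ^ (-(1 / (p - 1))) * y ^ (-(1 / (p - 1))) := by
        rw [← Real.rpow_neg_one]
        exact mul_le_mul_of_nonneg_left (Real.rpow_le_rpow_of_exponent_ge hy0 hy1 hexp)
          (by positivity)
    _ = ((β + |t|) * y) ^ (-(1 / (p - 1))) := (Real.mul_rpow hc.le hy0.le).symm
    _ ≤ radialSlope p α β t y := Real.rpow_le_rpow_of_nonpos hw hwle (by linarith)

theorem tendsto_radialProfile_atTop (hp : 1 < p) (hp2 : p ≤ 2) :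
    Tendsto (radialProfile p α β t) (𝓝[>] 0) atTop := by
  set c := (β + |t|) ^ (-(1 / (p - 1)))
  have hc : 0 < c := Real.rpow_pos_of_pos (by linarith [le_abs_self t]) _
  have hlog : Tendsto (fun r => -c * Real.log r) (𝓝[>] 0) atTop :=
    Real.tendsto_log_nhdsGT_zero.const_mul_atBot_of_neg (neg_neg_of_pos hc)
  refine tendsto_atTop_mono' _ ?_ hlog
  filter_upwards [Ioo_mem_nhdsGT one_pos] with r hr
  calc -c * Real.log r = ∫ y in r..1, c * y⁻¹ := by
        rw [intervalIntegral.integral_const_mul, integral_inv_of_pos hr.1 one_pos, one_div,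
          Real.log_inv]
        ring
    _ ≤ radialProfile p α β t r :=
      intervalIntegral.integral_mono_on hr.2.le
        ((intervalIntegrable_inv_iff.2 (Or.inr (notMem_uIcc_of_lt hr.1 one_pos))).const_mul c)
        (intervalIntegrable_radialSlope hβ hα ht hr.1 hr.2.le)
        fun y hy => rpow_mul_inv_le_radialSlope hβ hα ht hp hp2 (hr.1.trans_le hy.1) hy.2

end Admissible

end Profile

theorem neg_lap_radialProfile_comp_norm {N : ℕ} {p α β t : ℝ} (hp : p ≠ 1)
    (hα : α = (p - 1) * (N - 1)) (hβ : β * (α - 1) = p - 1) (hβ0 : 0 ≤ β) (hα1 : 1 ≤ α)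
    (ht : -β < t) {x : EuclideanSpace ℝ (Fin N)} (hx : ‖x‖ ∈ Ioo 0 1) :
    -lap (fun y => radialProfile p α β t ‖y‖) x =
      ‖gradient (fun y => radialProfile p α β t ‖y‖) x‖ ^ p := by
  have hx0 : x ≠ 0 := norm_pos_iff.mp hx.1
  have hw := mul_add_mul_rpow_pos hβ0 hα1 ht hx.1 hx.2.le
  have hf : ∀ᶠ r in 𝓝 ‖x‖, HasDerivAt (radialProfile p α β t) (-radialSlope p α β t r) r :=
    eventually_of_mem (Ioo_mem_nhds hx.1 hx.2) fun r hr => hasDerivAt_radialProfile hβ0 hα1 ht hr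
  rw [lap_comp_norm hf (hasDerivAt_radialSlope hp hα hβ hx.1 hw).neg hx0,
    hf.self_of_nhds.norm_gradient_comp_norm hx0, abs_neg,
    abs_of_pos (show 0 < radialSlope p α β t ‖x‖ from Real.rpow_pos_of_pos hw _)]
  ring

/-- the explicit radial function
`u_t(r) = ∫_r^1 (βy + ty^α)^{-1/(p-1)} dy` gives a positive singular classical solution of
`-Δu = |∇u|^p` on `B₁ \ {0}` vanishing on `∂B₁` and blowing up at the origin. -/
theorem stmt_3 (N : ℕ) (hN : 3 ≤ N) (p : ℝ)
    (hp1 : (N : ℝ) / ((N : ℝ) - 1) < p) (hp2 : p < 2)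
    (α β t : ℝ) (hα : α = (p - 1) * ((N : ℝ) - 1)) (hβ : β = (p - 1) / (α - 1))
    (ht : -β < t)
    (ut : ℝ → ℝ)
    (hut : ∀ r : ℝ, ut r = ∫ y in r..(1 : ℝ), (β * y + t * y ^ α) ^ (-(1 / (p - 1))))
    (u : EuclideanSpace ℝ (Fin N) → ℝ) (hu : ∀ x, u x = ut ‖x‖) :
    (∀ x ∈ ball (0 : EuclideanSpace ℝ (Fin N)) 1 \ {0}, 0 < u x) ∧
    ContDiffOn ℝ 2 u (ball (0 : EuclideanSpace ℝ (Fin N)) 1 \ {0}) ∧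
    (∀ x ∈ ball (0 : EuclideanSpace ℝ (Fin N)) 1 \ {0},
      -lap u x = ‖gradient u x‖ ^ p) ∧
    (∀ x : EuclideanSpace ℝ (Fin N), ‖x‖ = 1 → u x = 0) ∧
    Tendsto ut (𝓝[>] (0 : ℝ)) atTop := by
  have hN' : (3 : ℝ) ≤ N := by exact_mod_cast hN
  have hp : 1 < p := lt_of_le_of_lt (by rw [le_div_iff₀ (by linarith)]; linarith) hp1
  have hα1 : 1 < α := by
    have := (div_lt_iff₀ (by linarith : (0 : ℝ) < N - 1)).mp hp1
    rw [hα]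
    nlinarith
  have hβα : β * (α - 1) = p - 1 := by
    rw [hβ]
    field_simp [(sub_pos.mpr hα1).ne']
  have hβ0 : 0 ≤ β := by rw [hβ]; exact div_nonneg (by linarith) (by linarith)
  obtain rfl : ut = radialProfile p α β t := funext hut
  obtain rfl : u = fun x => radialProfile p α β t ‖x‖ := funext hu
  have hnorm : ∀ x ∈ ball (0 : EuclideanSpace ℝ (Fin N)) 1 \ {0}, ‖x‖ ∈ Ioo 0 1 :=
    fun x hx => ⟨norm_pos_iff.mpr hx.2, mem_ball_zero_iff.mp hx.1⟩
  refine ⟨fun x hx => radialProfile_pos hβ0 hα1.le ht (hnorm x hx), fun x hx => ?_,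
    fun x hx => neg_lap_radialProfile_comp_norm hp.ne' hα hβα hβ0 hα1.le ht (hnorm x hx),
    fun x hx => by simp [hx, radialProfile], tendsto_radialProfile_atTop hβ0 hα1.le ht hp hp2.le⟩
  exact (((contDiffOn_radialProfile (n := 2) hβ0 hα1.le ht).contDiffAt
    (Ioo_mem_nhds (hnorm x hx).1 (hnorm x hx).2)).comp x
    (contDiffAt_norm ℝ (norm_pos_iff.mp (hnorm x hx).1))).contDiffWithinAt
end

section
/- Let N ≥ 3 be an integer, N/(N−1) < p < 2, α := (p−1)(N−1), β := (p−1)/(α−1), σ := (2−p)/(p−1). Then there exists C > 0 such that for every t ≥ 1 and every continuous function b : (0,1] → ℝ with sup_{0<r≤1} r^{σ+2}|b(r)| ≤ 1, there exists a twice continuously differentiable function a : (0,1] → ℝ with a(1) = 0 satisfying the ordinary differential equation −a''(r) − (N−1)a'(r)/r + p·a'(r)/(β r + t r^α) = b(r) for all 0 < r < 1, together with the uniform estimate sup_{0<r≤1} r^{σ+1}|a'(r)| ≤ C. -/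
/-!
With `u = a'` the equation is the linear first-order equation `u' = q u - b`,
`q r = -(N - 1)/r + p/(β r + t r^α)`, which has the integrating factor
`μ r = r^(α - γ) (β + t r^(α - 1))^(-γ)`, `γ = σ + 2 = p/(p - 1)`. So `u = -μ ∫_{r₀}^r b/μ` and
`a = ∫_1^r u`. As `|b/μ| ≤ s^(-α) (β + t s^(α - 1))^γ`, split at the point `r₀` where
`t r₀^(α - 1) = β` (or `r₀ = 1`): below it the bracket is at most `2β`, above it at most
`2 t s^(α - 1)`, and in both regimes the weight `r^(γ - 1) μ r` exactly cancels the power of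
`r` produced by the integral, uniformly in `t`.
-/

open Set Filter
open scoped Topology
open MeasureTheory intervalIntegral

theorem hasDerivAt_integral_of_continuousOn {s : Set ℝ} (hs : IsOpen s) (hs' : s.OrdConnected)
    {f : ℝ → ℝ} (hf : ContinuousOn f s) {c x : ℝ} (hc : c ∈ s) (hx : x ∈ s) :
    HasDerivAt (fun r => ∫ y in c..r, f y) (f x) x :=
  integral_hasDerivAt_right (hf.mono (hs'.uIcc_subset hc hx)).intervalIntegrable
    (hf.stronglyMeasurableAtFilter hs x hx) (hf.continuousAt (hs.mem_nhds hx))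

theorem hasDerivAt_neg_mul_integral_div {s : Set ℝ} (hs : IsOpen s) (hs' : s.OrdConnected)
    {μ q b : ℝ → ℝ} (hμ : ∀ x ∈ s, HasDerivAt μ (q x * μ x) x) (hμ0 : ∀ x ∈ s, μ x ≠ 0)
    (hb : ContinuousOn b s) {x₀ x : ℝ} (hx₀ : x₀ ∈ s) (hx : x ∈ s) :
    HasDerivAt (fun r => -(μ r * ∫ y in x₀..r, b y / μ y))
      (q x * -(μ x * ∫ y in x₀..x, b y / μ y) - b x) x := by
  have hμc : ContinuousOn μ s := fun y hy => (hμ y hy).continuousAt.continuousWithinAt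
  have hB : HasDerivAt (fun r => ∫ y in x₀..r, b y / μ y) (b x / μ x) x :=
    hasDerivAt_integral_of_continuousOn hs hs' (hb.div hμc hμ0) hx₀ hx
  refine ((hμ x hx).fun_mul hB).fun_neg.congr_deriv ?_
  field_simp [hμ0 x hx]
  ring

theorem contDiffOn_two_of_hasDerivAt {s : Set ℝ} (hs : IsOpen s) {a u g : ℝ → ℝ}
    (ha : ∀ x ∈ s, HasDerivAt a (u x) x) (hu : ∀ x ∈ s, HasDerivAt u (g x) x)
    (hg : ContinuousOn g s) : ContDiffOn ℝ 2 a s := by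
  have hu1 : ContDiffOn ℝ 1 u s := by
    rw [show (1 : WithTop ℕ∞) = 0 + 1 by norm_num, contDiffOn_succ_iff_deriv_of_isOpen hs]
    exact ⟨fun x hx => (hu x hx).differentiableAt.differentiableWithinAt, by simp,
      contDiffOn_zero.2 (hg.congr fun x hx => (hu x hx).deriv)⟩
  rw [show (2 : WithTop ℕ∞) = 1 + 1 by norm_num, contDiffOn_succ_iff_deriv_of_isOpen hs]
  exact ⟨fun x hx => (ha x hx).differentiableAt.differentiableWithinAt, by simp,
    hu1.congr fun x hx => (ha x hx).deriv⟩

theorem deriv_deriv_eq_of_hasDerivAt {s : Set ℝ} (hs : IsOpen s) {a u g : ℝ → ℝ}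
    (ha : ∀ x ∈ s, HasDerivAt a (u x) x) (hu : ∀ x ∈ s, HasDerivAt u (g x) x) {x : ℝ}
    (hx : x ∈ s) : deriv (deriv a) x = g x := by
  rw [(eventuallyEq_of_mem (hs.mem_nhds hx) fun y hy => (ha y hy).deriv).deriv_eq]
  exact (hu x hx).deriv

theorem integral_rpow_neg_le {α x y : ℝ} (hα : 1 < α) (hx : 0 < x) (hxy : x ≤ y) :
    ∫ s in x..y, s ^ (-α) ≤ x ^ (1 - α) / (α - 1) := by
  rw [integral_rpow (Or.inr ⟨by linarith, notMem_uIcc_of_lt hx (hx.trans_le hxy)⟩),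
    show -α + 1 = -(α - 1) by ring, div_neg, ← neg_div, neg_sub, show 1 - α = -(α - 1) by ring]
  gcongr
  linarith [Real.rpow_nonneg (hx.le.trans hxy) (-(α - 1))]

theorem integral_rpow_le {e x y : ℝ} (he : -1 < e) (hx : 0 ≤ x) :
    ∫ s in x..y, s ^ e ≤ y ^ (e + 1) / (e + 1) := by
  rw [integral_rpow (Or.inl he)]
  gcongr
  · linarith
  · linarith [Real.rpow_nonneg hx (e + 1)]

noncomputable def integratingFactor (α β γ t x : ℝ) : ℝ :=
  x ^ (α - γ) * (β + t * x ^ (α - 1)) ^ (-γ)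

theorem integratingFactor_pos {α β γ t x : ℝ} (hx : 0 < x) (hW : 0 < β + t * x ^ (α - 1)) :
    0 < integratingFactor α β γ t x :=
  mul_pos (Real.rpow_pos_of_pos hx _) (Real.rpow_pos_of_pos hW _)

theorem hasDerivAt_integratingFactor {α β γ t x : ℝ} (hx : 0 < x)
    (hW : 0 < β + t * x ^ (α - 1)) :
    HasDerivAt (integratingFactor α β γ t)
      ((-(α * (γ - 1) / x) + γ * (α - 1) * β / (β * x + t * x ^ α)) *
        integratingFactor α β γ t x) x := by
  unfold integratingFactor
  have hpow := (((Real.hasDerivAt_rpow_const (p := α - 1) (Or.inl hx.ne')).const_mul t).const_add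
    β).rpow_const (p := -γ) (Or.inl hW.ne')
  refine ((Real.hasDerivAt_rpow_const (p := α - γ) (Or.inl hx.ne')).mul hpow).congr_deriv ?_
  have e1 : x ^ (α - γ - 1) = x ^ (α - γ) / x := by rw [Real.rpow_sub_one hx.ne']
  have e2 : (β + t * x ^ (α - 1)) ^ (-γ - 1)
      = (β + t * x ^ (α - 1)) ^ (-γ) / (β + t * x ^ (α - 1)) := by
    rw [Real.rpow_sub_one hW.ne']
  have e3 : x ^ (α - 1 - 1) = x ^ (α - 1) / x := by rw [Real.rpow_sub_one hx.ne']
  have e4 : β * x + t * x ^ α = x * (β + t * x ^ (α - 1)) := by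
    rw [Real.rpow_sub_one hx.ne']; field_simp
  rw [e1, e2, e3, e4]
  field_simp
  ring

theorem abs_div_integratingFactor_le {α β γ t s b : ℝ} (hs : 0 < s)
    (hW : 0 < β + t * s ^ (α - 1)) (hb : s ^ γ * |b| ≤ 1) :
    |b / integratingFactor α β γ t s| ≤ s ^ (-α) * (β + t * s ^ (α - 1)) ^ γ := by
  have h : |b / integratingFactor α β γ t s|
      = s ^ γ * |b| * (s ^ (-α) * (β + t * s ^ (α - 1)) ^ γ) := by
    rw [abs_div, abs_of_pos (integratingFactor_pos hs hW), integratingFactor,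
      Real.rpow_neg hW.le, Real.rpow_sub hs, Real.rpow_neg hs.le]
    field_simp
  rw [h]
  exact mul_le_of_le_one_left (by positivity) hb

section WeightedBound

variable {α β γ t r r₀ : ℝ} {w : ℝ → ℝ}

theorem rpow_mul_abs_integral_le_of_le (hα : 1 < α) (hβ : 0 < β) (ht : 0 ≤ t) (hγ : 0 ≤ γ)
    (hr : 0 < r) (hrr₀ : r ≤ r₀) (hr₀ : t * r₀ ^ (α - 1) ≤ β)
    (hw : ∀ s ∈ Icc r r₀, |w s| ≤ s ^ (-α) * (β + t * s ^ (α - 1)) ^ γ) :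
    r ^ (α - 1) * (β + t * r ^ (α - 1)) ^ (-γ) * |∫ s in r₀..r, w s| ≤ 2 ^ γ / (α - 1) := by
  have hpt : ∀ s ∈ Icc r r₀, |w s| ≤ (2 * β) ^ γ * s ^ (-α) := by
    intro s hs
    have hs0 : 0 < s := hr.trans_le hs.1
    have : t * s ^ (α - 1) ≤ β :=
      (mul_le_mul_of_nonneg_left (Real.rpow_le_rpow hs0.le hs.2 (by linarith)) ht).trans hr₀
    calc |w s| ≤ s ^ (-α) * (β + t * s ^ (α - 1)) ^ γ := hw s hs
      _ ≤ s ^ (-α) * (2 * β) ^ γ := by gcongr; linarith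
      _ = (2 * β) ^ γ * s ^ (-α) := mul_comm _ _
  have hint : |∫ s in r₀..r, w s| ≤ (2 * β) ^ γ * (r ^ (1 - α) / (α - 1)) := by
    rw [integral_symm, abs_neg, ← Real.norm_eq_abs]
    calc ‖∫ s in r..r₀, w s‖ ≤ ∫ s in r..r₀, (2 * β) ^ γ * s ^ (-α) :=
          norm_integral_le_of_norm_le hrr₀ (ae_of_all _ fun s hs => hpt s (Ioc_subset_Icc_self hs))
            ((intervalIntegrable_rpow
              (Or.inr (notMem_uIcc_of_lt hr (hr.trans_le hrr₀)))).const_mul _)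
      _ ≤ (2 * β) ^ γ * (r ^ (1 - α) / (α - 1)) := by
          rw [intervalIntegral.integral_const_mul]
          gcongr
          exact integral_rpow_neg_le hα hr hrr₀
  have hW : (β + t * r ^ (α - 1)) ^ (-γ) ≤ β ^ (-γ) :=
    Real.rpow_le_rpow_of_nonpos hβ (by have := Real.rpow_nonneg hr.le (α - 1); nlinarith)
      (by linarith)
  calc r ^ (α - 1) * (β + t * r ^ (α - 1)) ^ (-γ) * |∫ s in r₀..r, w s|
      ≤ r ^ (α - 1) * β ^ (-γ) * ((2 * β) ^ γ * (r ^ (1 - α) / (α - 1))) := by gcongr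
    _ = 2 ^ γ * (β ^ (-γ) * β ^ γ) * (r ^ (α - 1) * r ^ (1 - α)) / (α - 1) := by
        rw [Real.mul_rpow zero_le_two hβ.le]; ring
    _ = 2 ^ γ / (α - 1) := by
        rw [← Real.rpow_add hβ, ← Real.rpow_add hr]; ring_nf; simp

theorem rpow_mul_abs_integral_le_of_ge (hα : 1 < α) (hγ : 1 < γ) (hβ : 0 ≤ β) (ht : 0 < t)
    (hr₀ : 0 < r₀) (hr₀r : r₀ ≤ r) (hβr₀ : β ≤ t * r₀ ^ (α - 1))
    (hw : ∀ s ∈ Icc r₀ r, |w s| ≤ s ^ (-α) * (β + t * s ^ (α - 1)) ^ γ) :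
    r ^ (α - 1) * (β + t * r ^ (α - 1)) ^ (-γ) * |∫ s in r₀..r, w s|
      ≤ 2 ^ γ / ((α - 1) * (γ - 1)) := by
  have hr : 0 < r := hr₀.trans_le hr₀r
  have hpt : ∀ s ∈ Icc r₀ r, |w s| ≤ (2 * t) ^ γ * s ^ ((α - 1) * γ - α) := by
    intro s hs
    have hs0 : 0 < s := hr₀.trans_le hs.1
    have : β ≤ t * s ^ (α - 1) :=
      hβr₀.trans (mul_le_mul_of_nonneg_left (Real.rpow_le_rpow hr₀.le hs.1 (by linarith)) ht.le)
    calc |w s| ≤ s ^ (-α) * (β + t * s ^ (α - 1)) ^ γ := hw s hs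
      _ ≤ s ^ (-α) * ((2 * t) * s ^ (α - 1)) ^ γ := by gcongr; linarith
      _ = (2 * t) ^ γ * s ^ ((α - 1) * γ - α) := by
          rw [Real.mul_rpow (by positivity) (by positivity), ← Real.rpow_mul hs0.le,
            Real.rpow_sub hs0, Real.rpow_neg hs0.le]
          ring
  have he : (α - 1) * γ - α + 1 = (α - 1) * (γ - 1) := by ring
  have hint : |∫ s in r₀..r, w s|
      ≤ (2 * t) ^ γ * (r ^ ((α - 1) * (γ - 1)) / ((α - 1) * (γ - 1))) := by
    rw [← Real.norm_eq_abs]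
    calc ‖∫ s in r₀..r, w s‖ ≤ ∫ s in r₀..r, (2 * t) ^ γ * s ^ ((α - 1) * γ - α) :=
          norm_integral_le_of_norm_le hr₀r (ae_of_all _ fun s hs => hpt s (Ioc_subset_Icc_self hs))
            ((intervalIntegrable_rpow (Or.inr (notMem_uIcc_of_lt hr₀ hr))).const_mul _)
      _ ≤ (2 * t) ^ γ * (r ^ ((α - 1) * (γ - 1)) / ((α - 1) * (γ - 1))) := by
          rw [intervalIntegral.integral_const_mul, ← he]
          gcongr
          exact integral_rpow_le (by nlinarith) hr₀.le
  have hW : (β + t * r ^ (α - 1)) ^ (-γ) ≤ (t * r ^ (α - 1)) ^ (-γ) :=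
    Real.rpow_le_rpow_of_nonpos (by positivity) (by linarith) (by linarith)
  calc r ^ (α - 1) * (β + t * r ^ (α - 1)) ^ (-γ) * |∫ s in r₀..r, w s|
      ≤ r ^ (α - 1) * (t * r ^ (α - 1)) ^ (-γ)
          * ((2 * t) ^ γ * (r ^ ((α - 1) * (γ - 1)) / ((α - 1) * (γ - 1)))) := by gcongr
    _ = 2 ^ γ * (t ^ (-γ) * t ^ γ) * (r ^ (α - 1) * r ^ ((α - 1) * -γ) * r ^ ((α - 1) * (γ - 1)))
          / ((α - 1) * (γ - 1)) := by
        rw [Real.mul_rpow zero_le_two ht.le, Real.mul_rpow ht.le (by positivity),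
          ← Real.rpow_mul hr.le]
        ring
    _ = 2 ^ γ / ((α - 1) * (γ - 1)) := by
        rw [← Real.rpow_add ht, ← Real.rpow_add hr, ← Real.rpow_add hr]; ring_nf; simp

theorem exists_switchPoint (hα : 1 < α) (hβ : 0 < β) (ht : 0 < t) :
    ∃ r₀ ∈ Ioc (0 : ℝ) 1, t * r₀ ^ (α - 1) ≤ β ∧ (r₀ < 1 → β ≤ t * r₀ ^ (α - 1)) := by
  set s₀ := (β / t) ^ (α - 1)⁻¹
  have hs₀ : t * s₀ ^ (α - 1) = β := by
    rw [Real.rpow_inv_rpow (by positivity) (by linarith)]; field_simp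
  rcases le_total s₀ 1 with h | h
  · exact ⟨s₀, ⟨by positivity, h⟩, hs₀.le, fun _ => hs₀.ge⟩
  · refine ⟨1, ⟨one_pos, le_rfl⟩, ?_, fun h1 => absurd h1 (lt_irrefl 1)⟩
    rw [Real.one_rpow, mul_one, ← hs₀]
    exact le_mul_of_one_le_right ht.le (Real.one_le_rpow h (by linarith))

theorem rpow_mul_abs_integral_le (hα : 1 < α) (hβ : 0 < β) (hγ : 1 < γ) (ht : 0 < t)
    (hr₀ : r₀ ∈ Ioc (0 : ℝ) 1) (hr₀β : t * r₀ ^ (α - 1) ≤ β)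
    (hβr₀ : r₀ < 1 → β ≤ t * r₀ ^ (α - 1)) (hr : r ∈ Ioc (0 : ℝ) 1)
    (hw : ∀ s ∈ Ioc (0 : ℝ) 1, |w s| ≤ s ^ (-α) * (β + t * s ^ (α - 1)) ^ γ) :
    r ^ (α - 1) * (β + t * r ^ (α - 1)) ^ (-γ) * |∫ s in r₀..r, w s|
      ≤ 2 ^ γ / (α - 1) + 2 ^ γ / ((α - 1) * (γ - 1)) := by
  have h₁ : 0 ≤ 2 ^ γ / (α - 1) := div_nonneg (by positivity) (by linarith)
  have h₂ : 0 ≤ 2 ^ γ / ((α - 1) * (γ - 1)) :=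
    div_nonneg (by positivity) (mul_nonneg (by linarith) (by linarith))
  rcases le_or_gt r r₀ with hrr₀ | hr₀r
  · refine (rpow_mul_abs_integral_le_of_le hα hβ ht.le (by linarith) hr.1 hrr₀ hr₀β
      fun s hs => hw s ⟨hr.1.trans_le hs.1, hs.2.trans hr₀.2⟩).trans (by linarith)
  · refine (rpow_mul_abs_integral_le_of_ge hα hγ hβ.le ht hr₀.1 hr₀r.le
      (hβr₀ (hr₀r.trans_le hr.2)) fun s hs => hw s ⟨hr₀.1.trans_le hs.1, hs.2.trans hr.2⟩).trans
      (by linarith)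

theorem rpow_mul_abs_integratingFactor_mul_integral_le (hα : 1 < α) (hβ : 0 < β) (hγ : 1 < γ)
    (ht : 0 < t) (hr₀ : r₀ ∈ Ioc (0 : ℝ) 1) (hr₀β : t * r₀ ^ (α - 1) ≤ β)
    (hβr₀ : r₀ < 1 → β ≤ t * r₀ ^ (α - 1)) (hr : r ∈ Ioc (0 : ℝ) 1) {b : ℝ → ℝ}
    (hb : ∀ s ∈ Ioc (0 : ℝ) 1, s ^ γ * |b s| ≤ 1) :
    r ^ (γ - 1) * |integratingFactor α β γ t r * ∫ s in r₀..r, b s / integratingFactor α β γ t s|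
      ≤ 2 ^ γ / (α - 1) + 2 ^ γ / ((α - 1) * (γ - 1)) := by
  have hW : ∀ x : ℝ, 0 < x → 0 < β + t * x ^ (α - 1) := fun x hx => by positivity
  have hweight : r ^ (γ - 1) * integratingFactor α β γ t r
      = r ^ (α - 1) * (β + t * r ^ (α - 1)) ^ (-γ) := by
    rw [integratingFactor, ← mul_assoc, ← Real.rpow_add hr.1]
    ring_nf
  rw [abs_mul, abs_of_pos (integratingFactor_pos hr.1 (hW r hr.1)), ← mul_assoc, hweight]
  exact rpow_mul_abs_integral_le hα hβ hγ ht hr₀ hr₀β hβr₀ hr fun s hs =>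
    abs_div_integratingFactor_le hs.1 (hW s hs.1) (hb s hs)

end WeightedBound

theorem exists_radial_solution {α β γ c p t : ℝ} (hα : 1 < α) (hβ : 0 < β) (hγ : 1 < γ)
    (ht : 0 < t) (hc : c = α * (γ - 1)) (hp : p = γ * (α - 1) * β) {b : ℝ → ℝ}
    (hb : ContinuousOn b (Ioc 0 1)) (hb1 : ∀ r ∈ Ioc (0 : ℝ) 1, r ^ γ * |b r| ≤ 1) :
    ∃ a : ℝ → ℝ, ContDiffOn ℝ 2 a (Ioc 0 1) ∧ a 1 = 0 ∧
      (∀ r ∈ Ioo (0 : ℝ) 1,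
        -(deriv (deriv a) r) - c * deriv a r / r + p * deriv a r / (β * r + t * r ^ α) = b r) ∧
      ∀ r ∈ Ioc (0 : ℝ) 1,
        r ^ (γ - 1) * |deriv a r| ≤ 2 ^ γ / (α - 1) + 2 ^ γ / ((α - 1) * (γ - 1)) := by
  obtain ⟨r₀, hr₀, hr₀β, hβr₀⟩ := exists_switchPoint hα hβ ht
  set μ := integratingFactor α β γ t
  set q : ℝ → ℝ := fun x => -(c / x) + p / (β * x + t * x ^ α)
  -- extend `b` continuously past `1`, so that everything lives on the open set `Ioi 0`
  set b' : ℝ → ℝ := fun x => b (min x 1)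
  have hW : ∀ x ∈ Ioi (0 : ℝ), 0 < β + t * x ^ (α - 1) := fun x hx => by
    have : 0 < x := hx
    positivity
  have hμ : ∀ x ∈ Ioi (0 : ℝ), HasDerivAt μ (q x * μ x) x := fun x hx => by
    subst hc hp; exact hasDerivAt_integratingFactor hx (hW x hx)
  have hb' : ContinuousOn b' (Ioi 0) := hb.comp (continuous_id.min continuous_const).continuousOn
    fun x hx => ⟨lt_min hx one_pos, min_le_right _ _⟩
  set u : ℝ → ℝ := fun r => -(μ r * ∫ y in r₀..r, b' y / μ y)
  have hu : ∀ x ∈ Ioi (0 : ℝ), HasDerivAt u (q x * u x - b' x) x := fun x hx =>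
    hasDerivAt_neg_mul_integral_div isOpen_Ioi ordConnected_Ioi hμ
      (fun y hy => (integratingFactor_pos hy (hW y hy)).ne') hb' hr₀.1 hx
  have huc : ContinuousOn u (Ioi 0) := fun x hx => (hu x hx).continuousAt.continuousWithinAt
  have ha : ∀ x ∈ Ioi (0 : ℝ), HasDerivAt (fun r => ∫ y in (1 : ℝ)..r, u y) (u x) x :=
    fun x hx =>
      hasDerivAt_integral_of_continuousOn isOpen_Ioi ordConnected_Ioi huc (mem_Ioi.2 one_pos) hx
  have hq : ContinuousOn q (Ioi 0) := by
    have hden : ∀ x ∈ Ioi (0 : ℝ), β * x + t * x ^ α ≠ 0 := fun x hx => by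
      have : 0 < x := hx
      positivity
    exact (continuousOn_const.div continuousOn_id fun x hx => ne_of_gt hx).neg.add
      (continuousOn_const.div (by fun_prop (disch := linarith)) hden)
  refine ⟨fun r => ∫ y in (1 : ℝ)..r, u y,
    (contDiffOn_two_of_hasDerivAt isOpen_Ioi ha hu ((hq.mul huc).sub hb')).mono Ioc_subset_Ioi_self,
    integral_same, fun r hr => ?_, fun r hr => ?_⟩
  · rw [(ha r hr.1).deriv, deriv_deriv_eq_of_hasDerivAt isOpen_Ioi ha hu hr.1]
    simp only [q, b', min_eq_left hr.2.le]
    ring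
  · rw [(ha r hr.1).deriv, abs_neg]
    refine rpow_mul_abs_integratingFactor_mul_integral_le hα hβ hγ ht hr₀ hr₀β hβr₀ hr
      fun s hs => ?_
    simpa only [b', min_eq_left hs.2] using hb1 s hs

theorem stmt_9_general (N : ℕ) (hN : 3 ≤ N) (p : ℝ)
    (hp1 : (N : ℝ) / ((N : ℝ) - 1) < p)
    (α β σ : ℝ) (hα : α = (p - 1) * ((N : ℝ) - 1)) (hβ : β = (p - 1) / (α - 1))
    (hσ : σ = (2 - p) / (p - 1)) :
    ∃ C > (0 : ℝ), ∀ t : ℝ, 1 ≤ t → ∀ b : ℝ → ℝ,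
      ContinuousOn b (Ioc (0 : ℝ) 1) →
      (∀ r ∈ Ioc (0 : ℝ) 1, r ^ (σ + 2) * |b r| ≤ 1) →
      ∃ a : ℝ → ℝ,
        ContDiffOn ℝ 2 a (Ioc (0 : ℝ) 1) ∧
        a 1 = 0 ∧
        (∀ r ∈ Ioo (0 : ℝ) 1,
          -(deriv (deriv a) r) - ((N : ℝ) - 1) * deriv a r / r
            + p * deriv a r / (β * r + t * r ^ α) = b r) ∧
        (∀ r ∈ Ioc (0 : ℝ) 1, r ^ (σ + 1) * |deriv a r| ≤ C) := by
  have hN1 : (0 : ℝ) < N - 1 := by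
    have : (3 : ℝ) ≤ N := by exact_mod_cast hN
    linarith
  have hp : 1 < p := ((one_lt_div hN1).2 (by linarith)).trans hp1
  have hα1 : 1 < α := by rw [hα]; nlinarith [(div_lt_iff₀ hN1).1 hp1]
  have hβ0 : 0 < β := by rw [hβ]; exact div_pos (by linarith) (by linarith)
  set γ := p / (p - 1) with hγdef
  have hγ : 1 < γ := (one_lt_div (by linarith)).2 (by linarith)
  have hp0 : p - 1 ≠ 0 := by linarith
  have hσγ : σ + 2 = γ := by rw [hσ, hγdef]; field_simp; ring
  refine ⟨2 ^ γ / (α - 1) + 2 ^ γ / ((α - 1) * (γ - 1)),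
    add_pos (div_pos (by positivity) (by linarith))
      (div_pos (by positivity) (mul_pos (by linarith) (by linarith))),
    fun t ht b hb hb1 => ?_⟩
  rw [show σ + 1 = γ - 1 by linarith]
  rw [hσγ] at hb1
  have hc : (N : ℝ) - 1 = α * (γ - 1) := by rw [hα, hγdef]; field_simp; ring
  have hpγ : p = γ * (α - 1) * β := by rw [hβ, hγdef]; field_simp [(by linarith : α - 1 ≠ 0)]
  exact exists_radial_solution hα1 hβ0 hγ (by linarith) hc hpγ hb hb1

/-- the `k = 0` (radial) mode of the linearized operator: uniform-in-`t`
solvability of the ODE `-a'' - (N-1)a'/r + p a'/(βr + tr^α) = b` on `(0,1)` with `a(1) = 0`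
and the weighted estimate `sup r^{σ+1}|a'(r)| ≤ C`. -/
theorem stmt_9 (N : ℕ) (hN : 3 ≤ N) (p : ℝ)
    (hp1 : (N : ℝ) / ((N : ℝ) - 1) < p) (hp2 : p < 2)
    (α β σ : ℝ) (hα : α = (p - 1) * ((N : ℝ) - 1)) (hβ : β = (p - 1) / (α - 1))
    (hσ : σ = (2 - p) / (p - 1)) :
    ∃ C > (0 : ℝ), ∀ t : ℝ, 1 ≤ t → ∀ b : ℝ → ℝ,
      ContinuousOn b (Ioc (0 : ℝ) 1) →
      (∀ r ∈ Ioc (0 : ℝ) 1, r ^ (σ + 2) * |b r| ≤ 1) →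
      ∃ a : ℝ → ℝ,
        ContDiffOn ℝ 2 a (Ioc (0 : ℝ) 1) ∧
        a 1 = 0 ∧
        (∀ r ∈ Ioo (0 : ℝ) 1,
          -(deriv (deriv a) r) - ((N : ℝ) - 1) * deriv a r / r
            + p * deriv a r / (β * r + t * r ^ α) = b r) ∧
        (∀ r ∈ Ioc (0 : ℝ) 1, r ^ (σ + 1) * |deriv a r| ≤ C) :=
  stmt_9_general N hN p hp1 α β σ hα hβ hσ
end

section
/- Let 1 < p ≤ 2. Then there exists a constant C = C_p > 0 such that for all x, y ∈ ℝ^N one has 0 ≤ |x+y|^p − |x|^p − p|x|^{p−2}(x·y) ≤ C|y|^p, where the term |x|^{p−2}x is interpreted as 0 when x = 0. -/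
/-!
Write `a = ‖x‖`, `b = ‖y‖`, `c = ‖x + y‖`. The lower bound is the tangent-line inequality for the
convex function `t ↦ t ^ p` at `a` (Bernoulli), combined with `⟪x, y⟫ ≤ a (c - a)`, which is
Cauchy–Schwarz for `⟪x, x + y⟫`. For the upper bound when `b ≤ a`, the tangent-line inequality for
the concave function `t ↦ t ^ (p / 2)` at `a²`, applied to `c² = a² + 2⟪x, y⟫ + b²`, leaves the
remainder `(p / 2) a ^ (p - 2) b² ≤ (p / 2) b ^ p`, as `p ≤ 2`. When `a < b`, every term is crudely
bounded by a multiple of `b ^ p`, using `c ≤ 2b` and `2 ^ p ≤ 4`.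
-/

open RealInnerProductSpace

namespace Real

variable {a c p : ℝ}

lemma rpow_add_mul_sub_le_rpow (hp : 1 ≤ p) (ha : 0 < a) (hc : 0 ≤ c) :
    a ^ p + p * a ^ (p - 1) * (c - a) ≤ c ^ p := by
  have hbern := one_add_mul_self_le_rpow_one_add (s := c / a - 1)
    (by linarith [div_nonneg hc ha.le]) hp
  rw [add_sub_cancel, div_rpow hc ha.le, le_div_iff₀ (by positivity)] at hbern
  calc a ^ p + p * a ^ (p - 1) * (c - a) = (1 + p * (c / a - 1)) * a ^ p := by
        rw [rpow_sub_one ha.ne']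
        field_simp
    _ ≤ c ^ p := hbern

lemma rpow_le_add_mul_sub (hp₀ : 0 ≤ p) (hp₁ : p ≤ 1) (ha : 0 < a) (hc : 0 ≤ c) :
    c ^ p ≤ a ^ p + p * a ^ (p - 1) * (c - a) := by
  have hbern := rpow_one_add_le_one_add_mul_self (s := c / a - 1)
    (by linarith [div_nonneg hc ha.le]) hp₀ hp₁
  rw [add_sub_cancel, div_rpow hc ha.le, div_le_iff₀ (by positivity)] at hbern
  calc c ^ p ≤ (1 + p * (c / a - 1)) * a ^ p := hbern
    _ = a ^ p + p * a ^ (p - 1) * (c - a) := by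
        rw [rpow_sub_one ha.ne']
        field_simp

lemma sq_rpow_div_two (ha : 0 ≤ a) (r : ℝ) : (a ^ 2) ^ (r / 2) = a ^ r := by
  rw [rpow_div_two_eq_sqrt r (sq_nonneg a), sqrt_sq ha]

lemma rpow_sub_two_mul_sq_le_rpow {b : ℝ} (hp₀ : 0 < p) (hp₂ : p ≤ 2) (hb : 0 ≤ b) (hba : b ≤ a) :
    a ^ (p - 2) * b ^ 2 ≤ b ^ p := by
  rcases hb.eq_or_lt with rfl | hb
  · simp [zero_rpow hp₀.ne']
  calc a ^ (p - 2) * b ^ 2 ≤ b ^ (p - 2) * b ^ 2 :=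
        mul_le_mul_of_nonneg_right (rpow_le_rpow_of_nonpos hb hba (by linarith)) (sq_nonneg b)
    _ = b ^ p := by rw [← rpow_two, ← rpow_add hb, sub_add_cancel]

end Real

section NormRpow

variable {E : Type*} [NormedAddCommGroup E] [InnerProductSpace ℝ E] {p : ℝ}

/-- At `x = 0` the gradient term vanishes whatever `0 ^ (p - 2)` is, since `⟪0, y⟫ = 0`; this is
the convention `|x| ^ (p - 2) x := 0`. -/
noncomputable def normRpowRemainder (p : ℝ) (x y : E) : ℝ :=
  ‖x + y‖ ^ p - ‖x‖ ^ p - p * ‖x‖ ^ (p - 2) * ⟪x, y⟫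

lemma normRpowRemainder_zero_left (hp : p ≠ 0) (y : E) :
    normRpowRemainder p 0 y = ‖y‖ ^ p := by
  simp [normRpowRemainder, Real.zero_rpow hp]

lemma normRpowRemainder_nonneg (hp : 1 ≤ p) (x y : E) : 0 ≤ normRpowRemainder p x y := by
  rcases eq_or_ne x 0 with rfl | hx
  · rw [normRpowRemainder_zero_left (by linarith)]
    positivity
  have ha : 0 < ‖x‖ := norm_pos_iff.mpr hx
  have hinner : ⟪x, y⟫ ≤ ‖x‖ * (‖x + y‖ - ‖x‖) := by
    have := real_inner_le_norm x (x + y)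
    rw [inner_add_right, real_inner_self_eq_norm_sq] at this
    linarith
  have hgrad : p * ‖x‖ ^ (p - 2) * ⟪x, y⟫ ≤ p * ‖x‖ ^ (p - 1) * (‖x + y‖ - ‖x‖) := by
    calc p * ‖x‖ ^ (p - 2) * ⟪x, y⟫ ≤ p * ‖x‖ ^ (p - 2) * (‖x‖ * (‖x + y‖ - ‖x‖)) := by
          gcongr
      _ = p * ‖x‖ ^ (p - 1) * (‖x + y‖ - ‖x‖) := by
          rw [show p - 1 = p - 2 + 1 by ring, Real.rpow_add_one ha.ne']
          ring
  have := Real.rpow_add_mul_sub_le_rpow hp ha (norm_nonneg (x + y))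
  unfold normRpowRemainder
  linarith

lemma normRpowRemainder_le_of_norm_le (hp₀ : 0 < p) (hp₂ : p ≤ 2) {x : E} (hx : x ≠ 0) {y : E}
    (hyx : ‖y‖ ≤ ‖x‖) : normRpowRemainder p x y ≤ p / 2 * ‖y‖ ^ p := by
  have ha : 0 < ‖x‖ := norm_pos_iff.mpr hx
  have hconcave := Real.rpow_le_add_mul_sub (p := p / 2) (by positivity) (by linarith)
    (pow_pos ha 2) (sq_nonneg ‖x + y‖)
  rw [show p / 2 - 1 = (p - 2) / 2 by ring, Real.sq_rpow_div_two ha.le,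
    Real.sq_rpow_div_two ha.le, Real.sq_rpow_div_two (norm_nonneg _), norm_add_sq_real] at hconcave
  have := Real.rpow_sub_two_mul_sq_le_rpow hp₀ hp₂ (norm_nonneg y) hyx
  unfold normRpowRemainder
  nlinarith

lemma normRpowRemainder_le_of_norm_lt (hp₁ : 1 ≤ p) (hp₂ : p ≤ 2) {x : E} (hx : x ≠ 0) {y : E}
    (hxy : ‖x‖ < ‖y‖) : normRpowRemainder p x y ≤ 6 * ‖y‖ ^ p := by
  have ha : 0 < ‖x‖ := norm_pos_iff.mpr hx
  have hb : 0 < ‖y‖ := ha.trans hxy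
  have hsum : ‖x + y‖ ^ p ≤ 4 * ‖y‖ ^ p :=
    calc ‖x + y‖ ^ p ≤ (2 * ‖y‖) ^ p := by
          gcongr
          linarith [norm_add_le x y]
      _ = 2 ^ p * ‖y‖ ^ p := Real.mul_rpow zero_le_two hb.le
      _ ≤ 2 ^ (2 : ℝ) * ‖y‖ ^ p := by gcongr; norm_num
      _ = 4 * ‖y‖ ^ p := by norm_num
  have hgrad : -(p * ‖x‖ ^ (p - 2) * ⟪x, y⟫) ≤ 2 * ‖y‖ ^ p :=
    calc -(p * ‖x‖ ^ (p - 2) * ⟪x, y⟫) ≤ p * ‖x‖ ^ (p - 2) * (‖x‖ * ‖y‖) := by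
          rw [← mul_neg]
          gcongr
          linarith [neg_le_of_abs_le (abs_real_inner_le_norm x y)]
      _ = p * ‖x‖ ^ (p - 1) * ‖y‖ := by
          rw [show p - 1 = p - 2 + 1 by ring, Real.rpow_add_one ha.ne']
          ring
      _ ≤ 2 * ‖y‖ ^ (p - 1) * ‖y‖ := by gcongr
      _ = 2 * ‖y‖ ^ p := by
          rw [mul_assoc, ← Real.rpow_add_one hb.ne', sub_add_cancel]
  unfold normRpowRemainder
  linarith [Real.rpow_nonneg (norm_nonneg x) p]

lemma normRpowRemainder_le (hp₁ : 1 ≤ p) (hp₂ : p ≤ 2) (x y : E) :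
    normRpowRemainder p x y ≤ 6 * ‖y‖ ^ p := by
  have hy : 0 ≤ ‖y‖ ^ p := by positivity
  rcases eq_or_ne x 0 with rfl | hx
  · rw [normRpowRemainder_zero_left (by linarith)]
    linarith
  rcases le_or_gt ‖y‖ ‖x‖ with hyx | hxy
  · nlinarith [normRpowRemainder_le_of_norm_le (by linarith) hp₂ hx hyx]
  · exact normRpowRemainder_le_of_norm_lt hp₁ hp₂ hx hxy

end NormRpow

/-- for `1 < p ≤ 2` there is `C = C_p` with
`0 ≤ |x+y|^p - |x|^p - p|x|^{p-2}(x·y) ≤ C|y|^p` for all `x, y ∈ ℝ^N`.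
(Note `‖x‖^(p-2) * ⟪x, y⟫ = 0` automatically when `x = 0`, matching the convention
`|x|^{p-2}x := 0` for `x = 0`.) -/
theorem stmt_10 (p : ℝ) (hp1 : 1 < p) (hp2 : p ≤ 2) :
    ∃ C > (0 : ℝ), ∀ (N : ℕ) (x y : EuclideanSpace ℝ (Fin N)),
      0 ≤ ‖x + y‖ ^ p - ‖x‖ ^ p - p * ‖x‖ ^ (p - 2) * (inner ℝ x y : ℝ) ∧
      ‖x + y‖ ^ p - ‖x‖ ^ p - p * ‖x‖ ^ (p - 2) * (inner ℝ x y : ℝ) ≤ C * ‖y‖ ^ p :=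
  ⟨6, by norm_num, fun _ x y =>
    ⟨normRpowRemainder_nonneg hp1.le x y, normRpowRemainder_le hp1.le hp2 x y⟩⟩
end

section
/- Let 1 < p ≤ 2. Then there exists a constant C = C_p > 0 such that for all x, y, z ∈ ℝ^N one has | |x+y|^p − p|x|^{p−2}(x·y) − |x+z|^p + p|x|^{p−2}(x·z) | ≤ C ( |y|^{p−1} + |z|^{p−1} ) |y−z|, where the term |x|^{p−2}x is interpreted as 0 when x = 0. -/
/-!
With `φ a = ‖a‖ ^ (p - 2) • a`, the function `w ↦ ‖x + w‖ ^ p - p ‖x‖ ^ (p - 2) ⟪x, w⟫` has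
derivative `p ⟪φ (x + w) - φ x, ·⟫`. In any real normed space `φ` is `(p - 1)`-Hölder with
constant `3`, so on the segment `[z, y]` this derivative has norm at most
`3 p (‖y‖ ^ (p - 1) + ‖z‖ ^ (p - 1))`, and the mean value inequality gives the estimate with
`C = 3 p`.
-/

open Real

lemma mul_rpow_sub_one_sub_rpow_sub_one_le {α s t d : ℝ} (hα0 : 0 ≤ α) (hα1 : α ≤ 1)
    (hd : 0 < d) (hds : d ≤ s) (hst : s ≤ t) (hts : t - s ≤ d) :
    s * (s ^ (α - 1) - t ^ (α - 1)) ≤ d ^ α := by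
  have hs : 0 < s := hd.trans_le hds
  have ht : 0 < t := hs.trans_le hst
  calc s * (s ^ (α - 1) - t ^ (α - 1)) = s ^ α - s * t ^ α / t := by
        rw [rpow_sub_one hs.ne', rpow_sub_one ht.ne', mul_sub, mul_div_cancel₀ _ hs.ne',
          mul_div_assoc]
    _ ≤ s ^ α - s * s ^ α / t := by gcongr
    _ = s ^ α * (t - s) / t := by field_simp
    _ ≤ s ^ α * (t - s) / s := by
        have : 0 ≤ s ^ α * (t - s) := mul_nonneg (by positivity) (by linarith)
        gcongr
    _ = s ^ (α - 1) * (t - s) := by rw [rpow_sub_one hs.ne']; ring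
    _ ≤ d ^ (α - 1) * d :=
        mul_le_mul (rpow_le_rpow_of_nonpos hd hds (by linarith)) hts (by linarith)
          (rpow_nonneg hd.le _)
    _ = d ^ α := by rw [rpow_sub_one hd.ne']; field_simp

section NormedSpace

variable {E : Type*} [NormedAddCommGroup E] [NormedSpace ℝ E] {α : ℝ}

lemma norm_rpow_sub_one_smul (hα : 0 < α) (a : E) : ‖(‖a‖ ^ (α - 1)) • a‖ = ‖a‖ ^ α := by
  rcases eq_or_ne a 0 with rfl | ha
  · simp [zero_rpow hα.ne']
  · rw [norm_smul, norm_of_nonneg (rpow_nonneg (norm_nonneg a) _),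
      rpow_sub_one (norm_ne_zero_iff.mpr ha), div_mul_cancel₀ _ (norm_ne_zero_iff.mpr ha)]

lemma norm_rpow_sub_one_smul_sub_le_of_norm_le (hα0 : 0 < α) (hα1 : α ≤ 1) {a b : E}
    (hab : ‖b‖ ≤ ‖a‖) :
    ‖(‖a‖ ^ (α - 1)) • a - (‖b‖ ^ (α - 1)) • b‖ ≤ 3 * ‖a - b‖ ^ α := by
  rcases eq_or_ne a b with rfl | hne
  · simp [zero_rpow hα0.ne']
  set d := ‖a - b‖
  have hd : 0 < d := norm_pos_iff.mpr (sub_ne_zero.mpr hne)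
  have had : ‖a‖ ≤ ‖b‖ + d := norm_le_norm_add_norm_sub' a b
  rcases le_or_gt ‖b‖ d with hbd | hdb
  · -- here `‖a‖ ≤ 2 d`, so each of the two terms alone is `O(d ^ α)`
    have hbα : ‖b‖ ^ α ≤ d ^ α := rpow_le_rpow (norm_nonneg b) hbd hα0.le
    have haα : ‖a‖ ^ α ≤ ‖b‖ ^ α + d ^ α :=
      (rpow_le_rpow (norm_nonneg a) had hα0.le).trans
        (rpow_add_le_add_rpow (norm_nonneg b) (norm_nonneg _) hα0.le hα1)
    calc ‖(‖a‖ ^ (α - 1)) • a - (‖b‖ ^ (α - 1)) • b‖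
        ≤ ‖(‖a‖ ^ (α - 1)) • a‖ + ‖(‖b‖ ^ (α - 1)) • b‖ := norm_sub_le _ _
      _ = ‖a‖ ^ α + ‖b‖ ^ α := by rw [norm_rpow_sub_one_smul hα0, norm_rpow_sub_one_smul hα0]
      _ ≤ 3 * d ^ α := by linarith
  · have hmono : ‖a‖ ^ (α - 1) ≤ ‖b‖ ^ (α - 1) :=
      rpow_le_rpow_of_nonpos (hd.trans hdb) hab (by linarith)
    have hsplit : (‖a‖ ^ (α - 1)) • a - (‖b‖ ^ (α - 1)) • b
        = (‖a‖ ^ (α - 1)) • (a - b) - (‖b‖ ^ (α - 1) - ‖a‖ ^ (α - 1)) • b := by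
      rw [smul_sub, sub_smul]; abel
    have h₁ : ‖(‖a‖ ^ (α - 1)) • (a - b)‖ ≤ d ^ α := by
      rw [norm_smul, norm_of_nonneg (rpow_nonneg (norm_nonneg a) _)]
      calc ‖a‖ ^ (α - 1) * d ≤ d ^ (α - 1) * d := by
            have := rpow_le_rpow_of_nonpos hd (hdb.le.trans hab) (by linarith : α - 1 ≤ 0)
            gcongr
        _ = d ^ α := by rw [rpow_sub_one hd.ne', div_mul_cancel₀ _ hd.ne']
    have h₂ : ‖(‖b‖ ^ (α - 1) - ‖a‖ ^ (α - 1)) • b‖ ≤ d ^ α := by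
      rw [norm_smul, norm_of_nonneg (sub_nonneg.mpr hmono), mul_comm]
      exact mul_rpow_sub_one_sub_rpow_sub_one_le hα0.le hα1 hd hdb.le hab (by linarith)
    calc ‖(‖a‖ ^ (α - 1)) • a - (‖b‖ ^ (α - 1)) • b‖
        ≤ ‖(‖a‖ ^ (α - 1)) • (a - b)‖ + ‖(‖b‖ ^ (α - 1) - ‖a‖ ^ (α - 1)) • b‖ := by
          rw [hsplit]; exact norm_sub_le _ _
      _ ≤ 3 * d ^ α := by linarith [rpow_nonneg hd.le α]

lemma norm_rpow_sub_one_smul_sub_le (hα0 : 0 < α) (hα1 : α ≤ 1) (a b : E) :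
    ‖(‖a‖ ^ (α - 1)) • a - (‖b‖ ^ (α - 1)) • b‖ ≤ 3 * ‖a - b‖ ^ α := by
  rcases le_total ‖b‖ ‖a‖ with h | h
  · exact norm_rpow_sub_one_smul_sub_le_of_norm_le hα0 hα1 h
  · rw [norm_sub_rev, norm_sub_rev a b]
    exact norm_rpow_sub_one_smul_sub_le_of_norm_le hα0 hα1 h

end NormedSpace

section InnerProductSpace

variable {E : Type*} [NormedAddCommGroup E] [InnerProductSpace ℝ E] {p : ℝ}

lemma hasFDerivAt_norm_add_rpow_sub_inner (hp : 1 < p) (x w : E) :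
    HasFDerivAt (fun w ↦ ‖x + w‖ ^ p - p * ‖x‖ ^ (p - 2) * inner ℝ x w)
      (p • innerSL ℝ ((‖x + w‖ ^ (p - 2)) • (x + w) - (‖x‖ ^ (p - 2)) • x)) w := by
  have h₁ := (hasFDerivAt_norm_rpow (x + w) hp).comp w ((hasFDerivAt_id w).const_add x)
  have h₂ := ((innerSL ℝ x).hasFDerivAt (x := w)).const_mul (p * ‖x‖ ^ (p - 2))
  refine (h₁.sub h₂).congr_fderiv ?_
  rw [ContinuousLinearMap.comp_id, map_sub, map_smul, map_smul, smul_sub, smul_smul, smul_smul]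

lemma norm_rpow_le_add_of_mem_segment {α : ℝ} (hα : 0 ≤ α) {y z w : E}
    (hw : w ∈ segment ℝ z y) : ‖w‖ ^ α ≤ ‖y‖ ^ α + ‖z‖ ^ α := by
  have hw' : ‖w‖ ≤ max ‖z‖ ‖y‖ := (convexOn_norm convex_univ).le_on_segment trivial trivial hw
  rcases le_total ‖z‖ ‖y‖ with h | h
  · rw [max_eq_right h] at hw'
    linarith [rpow_le_rpow (norm_nonneg w) hw' hα, rpow_nonneg (norm_nonneg z) α]
  · rw [max_eq_left h] at hw'
    linarith [rpow_le_rpow (norm_nonneg w) hw' hα, rpow_nonneg (norm_nonneg y) α]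

theorem abs_norm_add_rpow_sub_inner_sub_le (hp1 : 1 < p) (hp2 : p ≤ 2) (x y z : E) :
    |‖x + y‖ ^ p - p * ‖x‖ ^ (p - 2) * inner ℝ x y
        - ‖x + z‖ ^ p + p * ‖x‖ ^ (p - 2) * inner ℝ x z| ≤
      3 * p * (‖y‖ ^ (p - 1) + ‖z‖ ^ (p - 1)) * ‖y - z‖ := by
  have hα0 : 0 < p - 1 := by linarith
  have hα1 : p - 1 ≤ 1 := by linarith
  have hbound : ∀ w ∈ segment ℝ z y,
      ‖p • innerSL ℝ ((‖x + w‖ ^ (p - 2)) • (x + w) - (‖x‖ ^ (p - 2)) • x)‖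
        ≤ 3 * p * (‖y‖ ^ (p - 1) + ‖z‖ ^ (p - 1)) := by
    intro w hw
    have h := norm_rpow_sub_one_smul_sub_le hα0 hα1 (x + w) x
    rw [show p - 1 - 1 = p - 2 by ring, add_sub_cancel_left] at h
    rw [norm_smul, innerSL_apply_norm, norm_of_nonneg (by linarith), mul_comm 3 p, mul_assoc]
    gcongr
    exact h.trans (by gcongr; exact norm_rpow_le_add_of_mem_segment hα0.le hw)
  have := (convex_segment z y).norm_image_sub_le_of_norm_hasFDerivWithin_le
    (fun w _ ↦ (hasFDerivAt_norm_add_rpow_sub_inner hp1 x w).hasFDerivWithinAt) hbound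
    (left_mem_segment ℝ z y) (right_mem_segment ℝ z y)
  rwa [sub_add, ← norm_eq_abs]

end InnerProductSpace

/-- for `1 < p ≤ 2` there is `C = C_p` with
`| |x+y|^p - p|x|^{p-2}(x·y) - |x+z|^p + p|x|^{p-2}(x·z) | ≤ C(|y|^{p-1} + |z|^{p-1})|y-z|`
for all `x, y, z ∈ ℝ^N`. (Note `‖x‖^(p-2) * ⟪x, ·⟫ = 0` automatically when `x = 0`,
matching the convention `|x|^{p-2}x := 0` for `x = 0`.) -/
theorem stmt_11 (p : ℝ) (hp1 : 1 < p) (hp2 : p ≤ 2) :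
    ∃ C > (0 : ℝ), ∀ (N : ℕ) (x y z : EuclideanSpace ℝ (Fin N)),
      |‖x + y‖ ^ p - p * ‖x‖ ^ (p - 2) * (inner ℝ x y : ℝ)
        - ‖x + z‖ ^ p + p * ‖x‖ ^ (p - 2) * (inner ℝ x z : ℝ)| ≤
        C * (‖y‖ ^ (p - 1) + ‖z‖ ^ (p - 1)) * ‖y - z‖ :=
  ⟨3 * p, by positivity, fun _ x y z ↦ abs_norm_add_rpow_sub_inner_sub_le hp1 hp2 x y z⟩
end
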